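/- arXiv:math/0606628 — 3 statements merged into one kernel-verified Lean document; each statement's English description precedes it below -/
import Mathlib

section
/- Let (J, +, •) be a right unital generalized Jordan algebra over a field k of characteristic not 2 or 3, with right unit 1, and let J^ann be the k-linear span of {x•y − y•x : x, y ∈ J}. Then the set of all right units of J equals {1 + a : a ∈ J^ann}; that is, an element e ∈ J satisfies x•e = x for all x ∈ J if and only if e − 1 ∈ J^ann. -/
namespace LinearMap

variable {R M : Type*} [CommSemiring R] [AddCommGroup M] [Module R M]

def commutatorSpan (mul : M →ₗ[R] M →ₗ[R] M) : Submodule R M :=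
  Submodule.span R {a | ∃ x y : M, a = mul x y - mul y x}

variable {mul : M →ₗ[R] M →ₗ[R] M}

theorem commutatorSpan_le_ker (rc : ∀ x y z : M, mul x (mul y z) = mul x (mul z y)) (x : M) :
    commutatorSpan mul ≤ ker (mul x) := by
  rw [commutatorSpan, Submodule.span_le]
  rintro _ ⟨y, z, rfl⟩
  simp [mem_ker, rc x y z]

theorem sub_mem_commutatorSpan_of_right_unit {one e : M} (hone : ∀ x, mul x one = x)
    (he : ∀ x, mul x e = x) : e - one ∈ commutatorSpan mul :=
  Submodule.subset_span ⟨e, one, by rw [hone e, he one]⟩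

theorem right_unit_of_sub_mem_commutatorSpan
    (rc : ∀ x y z : M, mul x (mul y z) = mul x (mul z y)) {one e : M}
    (hone : ∀ x, mul x one = x) (he : e - one ∈ commutatorSpan mul) (x : M) :
    mul x e = x := by
  have h : mul x (e - one) = 0 := commutatorSpan_le_ker rc x he
  rwa [map_sub, sub_eq_zero, hone x] at h

end LinearMap

theorem right_units_eq_one_add_annihilator_general
    (k : Type*) [Field k]
    (J : Type*) [AddCommGroup J] [Module k J]
    (mul : J →ₗ[k] J →ₗ[k] J)
    (rc : ∀ x y z : J, mul x (mul y z) = mul x (mul z y))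
    (one : J) (hone : ∀ x : J, mul x one = x)
    (Jann : Submodule k J)
    (hJann : Jann = Submodule.span k {a : J | ∃ x y : J, a = mul x y - mul y x}) :
    ∀ e : J, (∀ x : J, mul x e = x) ↔ e - one ∈ Jann := by
  intro e
  change Jann = LinearMap.commutatorSpan mul at hJann
  subst hJann
  exact ⟨LinearMap.sub_mem_commutatorSpan_of_right_unit hone,
    LinearMap.right_unit_of_sub_mem_commutatorSpan rc hone⟩

/-- In a right unital generalized Jordan algebra `(J, +, •)` over a field of
characteristic not `2` or `3` with right unit `1`, the set of all right units is
`{1 + a : a ∈ J^ann}`: an element `e` is a right unit iff `e − 1 ∈ J^ann`,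
where `J^ann = span{x•y − y•x}`. -/
theorem right_units_eq_one_add_annihilator
    (k : Type*) [Field k] (h2 : (2 : k) ≠ 0) (h3 : (3 : k) ≠ 0)
    (J : Type*) [AddCommGroup J] [Module k J]
    (mul : J →ₗ[k] J →ₗ[k] J)
    (rc : ∀ x y z : J, mul x (mul y z) = mul x (mul z y))
    (jordan : ∀ x y : J, mul (mul y x) (mul x x) = mul (mul y (mul x x)) x)
    (huliu : ∀ x y : J, mul x (mul y (mul x x)) - mul (mul x y) (mul x x)
      = (2 : k) • mul (mul x x) (mul y x) - (2 : k) • mul (mul (mul x x) y) x)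
    (one : J) (hone : ∀ x : J, mul x one = x)
    (Jann : Submodule k J)
    (hJann : Jann = Submodule.span k {a : J | ∃ x y : J, a = mul x y - mul y x}) :
    ∀ e : J, (∀ x : J, mul x e = x) ↔ e - one ∈ Jann :=
  right_units_eq_one_add_annihilator_general k J mul rc one hone Jann hJann
end

section
/- Let (J, +, •) be a generalized Jordan algebra over a field k of characteristic not 2 or 3, and let J^ann be the k-linear span of {x•y − y•x : x, y ∈ J}. On the vector space E := (J/J^ann) × J^ann define the product (x̄, u)∘(ȳ, v) := (x•y + J^ann, u•y + v•x), where x̄ = x + J^ann and ȳ = y + J^ann. Then this product is well defined (independent of the chosen representatives x and y), and E is a Jordan algebra: ∘ is bilinear, commutative, and satisfies the Jordan identity (B∘A)∘(A∘A) = (B∘(A∘A))∘A for all A, B ∈ E. (Equivalently, J^ann is a bimodule over the Jordan algebra J/J^ann under the action x̄·u = u·x̄ := u•x.) -/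
/-!
Right commutativity gives `z • (x • y - y • x) = 0`, so `J^ann` annihilates `J` from the right
and, since `u • y = u • y - y • u` for `u ∈ J^ann`, is also a left ideal. Hence `•` descends to
`J/J^ann` and to an action of `J/J^ann` on `J^ann`. The Jordan identity in the split null
extension splits into the Jordan identity of `J/J^ann`, the Jordan identity of `J` with
`y ∈ J^ann`, and an identity linear in `u ∈ J^ann`; the last one is the difference of the
Hu–Liu identity at `x + u` and at `x`, because `(x + u) • (x + u) = x • x + u • x`.
-/

section SplitNullExtension

variable {k Q M : Type*} [CommRing k] [AddCommGroup Q] [Module k Q] [AddCommGroup M] [Module k M]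

def splitNullMul (A : Q →ₗ[k] Q →ₗ[k] Q) (B : M →ₗ[k] Q →ₗ[k] M) :
    Q × M →ₗ[k] Q × M →ₗ[k] Q × M :=
  LinearMap.mk₂ k (fun a b => (A a.1 b.1, B a.2 b.1 + B b.2 a.1))
    (fun a a' b => by ext <;> simp [add_add_add_comm])
    (fun c a b => by ext <;> simp [smul_add])
    (fun a b b' => by ext <;> simp [add_add_add_comm])
    (fun c a b => by ext <;> simp [smul_add])

variable {A : Q →ₗ[k] Q →ₗ[k] Q} {B : M →ₗ[k] Q →ₗ[k] M}

local infixl:70 " ⋆ " => A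
local infixl:70 " ◃ " => B
local infixl:70 " ⊙ " => splitNullMul A B

@[simp]
theorem splitNullMul_apply (a b : Q × M) : a ⊙ b = (a.1 ⋆ b.1, a.2 ◃ b.1 + b.2 ◃ a.1) :=
  rfl

theorem splitNullMul_comm (hA : ∀ p q, p ⋆ q = q ⋆ p) (a b : Q × M) : a ⊙ b = b ⊙ a := by
  simp [hA a.1, add_comm]

theorem splitNullMul_jordan (hA : ∀ p q, (q ⋆ p) ⋆ (p ⋆ p) = (q ⋆ (p ⋆ p)) ⋆ p)
    (hB : ∀ v p, (v ◃ p) ◃ (p ⋆ p) = (v ◃ (p ⋆ p)) ◃ p)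
    (hB' : ∀ u p q,
      (u ◃ q) ◃ (p ⋆ p) + 2 • ((u ◃ p) ◃ (q ⋆ p))
        = 2 • (((u ◃ p) ◃ q) ◃ p) + u ◃ (q ⋆ (p ⋆ p)))
    (a b : Q × M) :
    (b ⊙ a) ⊙ (a ⊙ a) = (b ⊙ (a ⊙ a)) ⊙ a := by
  obtain ⟨p, u⟩ := a
  obtain ⟨q, v⟩ := b
  ext
  · exact hA p q
  · simp only [splitNullMul_apply, map_add, LinearMap.add_apply]
    linear_combination (norm := module) hB v p + hB' u p q

end SplitNullExtension

section HuLiu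

variable {k J : Type*} [CommRing k] [AddCommGroup J] [Module k J] {mul : J →ₗ[k] J →ₗ[k] J}

theorem huLiu_linearization
    (huliu : ∀ x y : J, mul x (mul y (mul x x)) - mul (mul x y) (mul x x)
      = (2 : k) • mul (mul x x) (mul y x) - (2 : k) • mul (mul (mul x x) y) x)
    {u x : J} (hu : ∀ z, mul z u = 0) (hux : ∀ z, mul z (mul u x) = 0) (y : J) :
    mul (mul u y) (mul x x) + 2 • mul (mul u x) (mul y x)
      = 2 • mul (mul (mul u x) y) x + mul u (mul y (mul x x)) := by
  have h := huliu (x + u) y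
  simp only [map_add, LinearMap.add_apply, hu, hux, add_zero, smul_add] at h
  linear_combination (norm := module) huliu x y - h

end HuLiu

section QuotientByAnnihilatedIdeal

variable {k J : Type*} [CommRing k] [AddCommGroup J] [Module k J]
  (mul : J →ₗ[k] J →ₗ[k] J) (I : Submodule k J)
  (hann : ∀ u ∈ I, ∀ z, mul z u = 0) (hleft : ∀ u ∈ I, ∀ y, mul u y ∈ I)

def quotientMul : J ⧸ I →ₗ[k] J ⧸ I →ₗ[k] J ⧸ I :=
  (mul.compr₂ I.mkQ).liftQ₂ I I
    (fun u hu => LinearMap.ext fun y => (Submodule.Quotient.mk_eq_zero I).2 (hleft u hu y))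
    (fun u hu => LinearMap.ext fun z => by simp [hann u hu z])

noncomputable def annAction : I →ₗ[k] J ⧸ I →ₗ[k] I :=
  (I.liftQ (LinearMap.codRestrict₂ (mul.domRestrict I) I.subtype I.injective_subtype
      (fun u y => by simpa using hleft u u.2 y)).flip
    (fun c hc => LinearMap.ext fun u => I.injective_subtype (by simp [hann c hc]))).flip

local infixl:70 " ⋆ " => quotientMul mul I hann hleft
local infixl:70 " ◃ " => annAction mul I hann hleft

@[simp]
theorem quotientMul_mk (x y : J) :
    Submodule.Quotient.mk x ⋆ Submodule.Quotient.mk y = Submodule.Quotient.mk (mul x y) :=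
  rfl

@[simp]
theorem coe_annAction_mk (u : I) (y : J) : (u ◃ Submodule.Quotient.mk y : J) = mul u y :=
  LinearMap.codRestrict₂_apply (mul.domRestrict I) I.subtype I.injective_subtype _ u y

variable {mul I hann hleft}

theorem quotientMul_comm (hcomm : ∀ x y, mul x y - mul y x ∈ I) (p q : J ⧸ I) :
    p ⋆ q = q ⋆ p := by
  induction p using Submodule.Quotient.induction_on with | _ x
  induction q using Submodule.Quotient.induction_on with | _ y
  exact (Submodule.Quotient.eq I).2 (hcomm x y)

theorem quotientMul_jordan (jordan : ∀ x y, mul (mul y x) (mul x x) = mul (mul y (mul x x)) x)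
    (p q : J ⧸ I) : (q ⋆ p) ⋆ (p ⋆ p) = (q ⋆ (p ⋆ p)) ⋆ p := by
  induction p using Submodule.Quotient.induction_on with | _ x
  induction q using Submodule.Quotient.induction_on with | _ y
  simp [jordan]

theorem annAction_jordan (jordan : ∀ x y, mul (mul y x) (mul x x) = mul (mul y (mul x x)) x)
    (v : I) (p : J ⧸ I) : (v ◃ p) ◃ (p ⋆ p) = (v ◃ (p ⋆ p)) ◃ p := by
  induction p using Submodule.Quotient.induction_on with | _ x
  ext
  simp [jordan]

theorem annAction_huLiu
    (huliu : ∀ x y : J, mul x (mul y (mul x x)) - mul (mul x y) (mul x x)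
      = (2 : k) • mul (mul x x) (mul y x) - (2 : k) • mul (mul (mul x x) y) x)
    (u : I) (p q : J ⧸ I) :
    (u ◃ q) ◃ (p ⋆ p) + 2 • ((u ◃ p) ◃ (q ⋆ p))
      = 2 • (((u ◃ p) ◃ q) ◃ p) + u ◃ (q ⋆ (p ⋆ p)) := by
  induction p using Submodule.Quotient.induction_on with | _ x
  induction q using Submodule.Quotient.induction_on with | _ y
  ext
  simpa using huLiu_linearization huliu (hann u u.2) (hann _ (hleft u u.2 x)) y

end QuotientByAnnihilatedIdeal

section CommutatorSpan

variable {k J : Type*} [CommRing k] [AddCommGroup J] [Module k J] (mul : J →ₗ[k] J →ₗ[k] J)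

def commutatorSpan : Submodule k J :=
  Submodule.span k {a | ∃ x y, a = mul x y - mul y x}

theorem mul_sub_mul_mem_commutatorSpan (x y : J) : mul x y - mul y x ∈ commutatorSpan mul :=
  Submodule.subset_span ⟨x, y, rfl⟩

variable {mul}

theorem mul_eq_zero_of_mem_commutatorSpan (rc : ∀ x y z, mul x (mul y z) = mul x (mul z y))
    {u : J} (hu : u ∈ commutatorSpan mul) (z : J) : mul z u = 0 := by
  induction hu using Submodule.span_induction with
  | mem a ha =>
    obtain ⟨x, y, rfl⟩ := ha
    simp [rc z x y]
  | zero => simp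
  | add a b _ _ ha hb => simp [ha, hb]
  | smul c a _ ha => simp [ha]

theorem mul_mem_commutatorSpan_of_mem (rc : ∀ x y z, mul x (mul y z) = mul x (mul z y))
    {u : J} (hu : u ∈ commutatorSpan mul) (y : J) : mul u y ∈ commutatorSpan mul := by
  simpa [mul_eq_zero_of_mem_commutatorSpan rc hu y] using mul_sub_mul_mem_commutatorSpan mul u y

end CommutatorSpan

theorem split_null_extension_isJordan_general
    (k : Type*) [Field k]
    (J : Type*) [AddCommGroup J] [Module k J]
    (mul : J →ₗ[k] J →ₗ[k] J)
    (rc : ∀ x y z : J, mul x (mul y z) = mul x (mul z y))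
    (jordan : ∀ x y : J, mul (mul y x) (mul x x) = mul (mul y (mul x x)) x)
    (huliu : ∀ x y : J, mul x (mul y (mul x x)) - mul (mul x y) (mul x x)
      = (2 : k) • mul (mul x x) (mul y x) - (2 : k) • mul (mul (mul x x) y) x)
    (Jann : Submodule k J)
    (hJann : Jann = Submodule.span k {a : J | ∃ x y : J, a = mul x y - mul y x}) :
    ∃ bmul : ((J ⧸ Jann) × Jann) →ₗ[k] ((J ⧸ Jann) × Jann) →ₗ[k] ((J ⧸ Jann) × Jann),
      -- the product is well defined and given on representatives by
      -- `(x̄, u)∘(ȳ, v) = ((x•y)‾, u•y + v•x)`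
      (∀ (x y : J) (u v : Jann),
        (bmul (Submodule.Quotient.mk x, u) (Submodule.Quotient.mk y, v)).1
            = (Submodule.Quotient.mk (mul x y) : J ⧸ Jann) ∧
        ((bmul (Submodule.Quotient.mk x, u) (Submodule.Quotient.mk y, v)).2 : J)
            = mul (u : J) y + mul (v : J) x) ∧
      -- commutativity
      (∀ a b : (J ⧸ Jann) × Jann, bmul a b = bmul b a) ∧
      -- Jordan identity
      (∀ a b : (J ⧸ Jann) × Jann,
        bmul (bmul b a) (bmul a a) = bmul (bmul b (bmul a a)) a) := by
  obtain rfl : Jann = commutatorSpan mul := hJann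
  have hann : ∀ u ∈ commutatorSpan mul, ∀ z, mul z u = 0 :=
    fun u hu => mul_eq_zero_of_mem_commutatorSpan rc hu
  have hleft : ∀ u ∈ commutatorSpan mul, ∀ y, mul u y ∈ commutatorSpan mul :=
    fun u hu => mul_mem_commutatorSpan_of_mem rc hu
  refine ⟨splitNullMul (quotientMul mul _ hann hleft) (annAction mul _ hann hleft),
    fun x y u v => ⟨rfl, by simp⟩,
    splitNullMul_comm (quotientMul_comm (mul_sub_mul_mem_commutatorSpan mul)),
    splitNullMul_jordan (quotientMul_jordan jordan) (annAction_jordan jordan)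
      (annAction_huLiu huliu)⟩

/-- For a generalized Jordan algebra `(J, +, •)` over a field of characteristic not
`2` or `3` with annihilator `J^ann = span{x•y − y•x}`, the split null extension
`E = (J/J^ann) × J^ann` with product `(x̄, u)∘(ȳ, v) = ((x•y)‾, u•y + v•x)` is
well defined and is a Jordan algebra (equivalently, `J^ann` is a bimodule over
the Jordan algebra `J/J^ann` via `x̄·u = u·x̄ = u•x`). -/
theorem split_null_extension_isJordan
    (k : Type*) [Field k] (h2 : (2 : k) ≠ 0) (h3 : (3 : k) ≠ 0)
    (J : Type*) [AddCommGroup J] [Module k J]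
    (mul : J →ₗ[k] J →ₗ[k] J)
    (rc : ∀ x y z : J, mul x (mul y z) = mul x (mul z y))
    (jordan : ∀ x y : J, mul (mul y x) (mul x x) = mul (mul y (mul x x)) x)
    (huliu : ∀ x y : J, mul x (mul y (mul x x)) - mul (mul x y) (mul x x)
      = (2 : k) • mul (mul x x) (mul y x) - (2 : k) • mul (mul (mul x x) y) x)
    (Jann : Submodule k J)
    (hJann : Jann = Submodule.span k {a : J | ∃ x y : J, a = mul x y - mul y x}) :
    ∃ bmul : ((J ⧸ Jann) × Jann) →ₗ[k] ((J ⧸ Jann) × Jann) →ₗ[k] ((J ⧸ Jann) × Jann),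
      -- the product is well defined and given on representatives by
      -- `(x̄, u)∘(ȳ, v) = ((x•y)‾, u•y + v•x)`
      (∀ (x y : J) (u v : Jann),
        (bmul (Submodule.Quotient.mk x, u) (Submodule.Quotient.mk y, v)).1
            = (Submodule.Quotient.mk (mul x y) : J ⧸ Jann) ∧
        ((bmul (Submodule.Quotient.mk x, u) (Submodule.Quotient.mk y, v)).2 : J)
            = mul (u : J) y + mul (v : J) x) ∧
      -- commutativity
      (∀ a b : (J ⧸ Jann) × Jann, bmul a b = bmul b a) ∧
      -- Jordan identity
      (∀ a b : (J ⧸ Jann) × Jann,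
        bmul (bmul b a) (bmul a a) = bmul (bmul b (bmul a a)) a) :=
  split_null_extension_isJordan_general k J mul rc jordan huliu Jann hJann
end

section
/- Let (M, +, ⟨ , ⟩) be a generalized Malcev algebra over a field k of characteristic not 2 or 3, and let M^ann be the k-linear span of {J⟨x, x, y⟩ : x, y ∈ M} ∪ {⟨x, x⟩ : x ∈ M}, where J⟨x, y, z⟩ := ⟨⟨x, y⟩, z⟩ − ⟨x, ⟨y, z⟩⟩ − ⟨⟨x, z⟩, y⟩. Then the quotient M/M^ann, with the induced bracket ⟨x + M^ann, y + M^ann⟩ := ⟨x, y⟩ + M^ann (well defined since M^ann is an ideal), is a Malcev algebra: the induced bracket is anti-commutative and satisfies the Malcev identity ⟨⟨x,y⟩,⟨x,z⟩⟩ = ⟨⟨⟨x,y⟩,z⟩,x⟩ + ⟨⟨⟨y,z⟩,x⟩,x⟩ + ⟨⟨⟨z,x⟩,x⟩,y⟩ in M/M^ann. -/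
/-! Right anti-commutativity forces `⟨z, ⟨x, x⟩⟩ = 0` and `⟨z, J⟨x, x, y⟩⟩ = 0`, so `M^ann` is
killed by bracketing from the left. Since `⟨a, b⟩ + ⟨b, a⟩` is a polarized square it lies in
`M^ann`, which makes `M^ann` a two-sided ideal and the induced bracket on `M/M^ann`
anti-commutative. For an anti-commutative bracket the second Hu–Liu identity is a rearrangement of
the Malcev identity. -/

/-- The right Jacobian `J⟨x, y, z⟩ = ⟨⟨x,y⟩,z⟩ − ⟨x,⟨y,z⟩⟩ − ⟨⟨x,z⟩,y⟩`. -/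
def rightJacobian {k M : Type*} [Field k] [AddCommGroup M] [Module k M]
    (br : M →ₗ[k] M →ₗ[k] M) (x y z : M) : M :=
  br (br x y) z - br x (br y z) - br (br x z) y

namespace LinearMap

variable {R M : Type*} [CommRing R] [AddCommGroup M] [Module R M] (br : M →ₗ[R] M →ₗ[R] M)

theorem malcev_of_anticomm_of_huLiu_second (anti : ∀ a b, br a b = -br b a)
    (hl2 : ∀ x y z : M,
      br (br y x) (br x z)
        = br (br (br y x) z) x - br y (br (br x z) x) - br (br (br y z) x) x)
    (a b c : M) :
    br (br a b) (br a c)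
      = br (br (br a b) c) a + br (br (br b c) a) a + br (br (br c a) a) b := by
  have e1 : br (br b a) (br a c) = -br (br a b) (br a c) := by
    rw [anti b a, map_neg, neg_apply]
  have e2 : br (br (br b a) c) a = -br (br (br a b) c) a := by
    rw [anti b a, map_neg, neg_apply, map_neg, neg_apply]
  have e3 : br b (br (br a c) a) = br (br (br c a) a) b := by
    rw [anti b, anti a c, map_neg, neg_apply, map_neg, neg_apply, neg_neg]
  linear_combination (norm := module) e1 - hl2 a b c - e2 + e3

def quotientBracket (N : Submodule R M) (hleft : ∀ a ∈ N, ∀ z, br a z ∈ N)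
    (hright : ∀ a ∈ N, ∀ z, br z a ∈ N) : M ⧸ N →ₗ[R] M ⧸ N →ₗ[R] M ⧸ N :=
  (br.compr₂ N.mkQ).liftQ₂ N N
    (fun a ha => ext fun z => (Submodule.Quotient.mk_eq_zero N).mpr (hleft a ha z))
    (fun a ha => ext fun z => (Submodule.Quotient.mk_eq_zero N).mpr (hright a ha z))

variable {br} {N : Submodule R M} {hleft : ∀ a ∈ N, ∀ z, br a z ∈ N}
  {hright : ∀ a ∈ N, ∀ z, br z a ∈ N}

@[simp]
theorem quotientBracket_mk (x y : M) :
    br.quotientBracket N hleft hright (Submodule.Quotient.mk x) (Submodule.Quotient.mk y)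
      = Submodule.Quotient.mk (br x y) :=
  rfl

theorem quotientBracket_anticomm (hsymm : ∀ x y, br x y + br y x ∈ N) (a b : M ⧸ N) :
    br.quotientBracket N hleft hright a b = -br.quotientBracket N hleft hright b a := by
  induction a using Submodule.Quotient.induction_on with | _ x => ?_
  induction b using Submodule.Quotient.induction_on with | _ y => ?_
  rw [quotientBracket_mk, quotientBracket_mk, ← Submodule.Quotient.mk_neg,
    Submodule.Quotient.eq, sub_neg_eq_add]
  exact hsymm x y

theorem quotientBracket_huLiu_second
    (hl2 : ∀ x y z : M,
      br (br y x) (br x z)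
        = br (br (br y x) z) x - br y (br (br x z) x) - br (br (br y z) x) x)
    (a b c : M ⧸ N) :
    letI qbr := br.quotientBracket N hleft hright
    qbr (qbr b a) (qbr a c)
      = qbr (qbr (qbr b a) c) a - qbr b (qbr (qbr a c) a) - qbr (qbr (qbr b c) a) a := by
  induction a using Submodule.Quotient.induction_on with | _ x => ?_
  induction b using Submodule.Quotient.induction_on with | _ y => ?_
  induction c using Submodule.Quotient.induction_on with | _ z => ?_
  simp only [quotientBracket_mk, hl2 x y z, Submodule.Quotient.mk_sub]

end LinearMap

namespace GeneralizedMalcev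

variable {k M : Type*} [Field k] [AddCommGroup M] [Module k M] (br : M →ₗ[k] M →ₗ[k] M)

def annihilator : Submodule k M :=
  Submodule.span k
    ({a : M | ∃ x y : M, a = rightJacobian br x x y} ∪ {a : M | ∃ x : M, a = br x x})

theorem br_self_mem_annihilator (x : M) : br x x ∈ annihilator br :=
  Submodule.subset_span (Or.inr ⟨x, rfl⟩)

theorem br_add_br_swap_mem_annihilator (a b : M) : br a b + br b a ∈ annihilator br := by
  have h : br a b + br b a = br (a + b) (a + b) - br a a - br b b := by
    simp only [map_add, LinearMap.add_apply]
    abel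
  rw [h]
  exact sub_mem (sub_mem (br_self_mem_annihilator br _) (br_self_mem_annihilator br a))
    (br_self_mem_annihilator br b)

variable {br} (h2 : (2 : k) ≠ 0) (rac : ∀ x y z : M, br x (br y z) = -br x (br z y))
include h2 rac

theorem br_br_self_eq_zero (z x : M) : br z (br x x) = 0 := by
  have h := rac z x x
  have h2smul : (2 : k) • br z (br x x) = 0 := by
    rw [two_smul]
    nth_rewrite 2 [h]
    exact add_neg_cancel _
  exact (smul_eq_zero.mp h2smul).resolve_left h2

theorem br_rightJacobian_self_eq_zero (z x y : M) : br z (rightJacobian br x x y) = 0 := by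
  rw [rightJacobian, map_sub, map_sub, rac z (br x x), br_br_self_eq_zero h2 rac, map_zero,
    neg_zero, rac z x (br x y)]
  abel

theorem br_eq_zero_of_mem_annihilator (z : M) {a : M} (ha : a ∈ annihilator br) : br z a = 0 := by
  suffices annihilator br ≤ LinearMap.ker (br z) from this ha
  rw [annihilator, Submodule.span_le]
  rintro _ (⟨x, y, rfl⟩ | ⟨x, rfl⟩)
  · exact br_rightJacobian_self_eq_zero h2 rac z x y
  · exact br_br_self_eq_zero h2 rac z x

theorem br_mem_annihilator_of_mem_left {a : M} (ha : a ∈ annihilator br) (z : M) :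
    br a z ∈ annihilator br := by
  simpa [br_eq_zero_of_mem_annihilator h2 rac z ha] using br_add_br_swap_mem_annihilator br a z

theorem br_mem_annihilator_of_mem_right {a : M} (ha : a ∈ annihilator br) (z : M) :
    br z a ∈ annihilator br := by
  rw [br_eq_zero_of_mem_annihilator h2 rac z ha]
  exact zero_mem _

end GeneralizedMalcev

open GeneralizedMalcev in
theorem quotient_by_annihilator_isMalcev_general
    (k : Type*) [Field k] (h2 : (2 : k) ≠ 0)
    (M : Type*) [AddCommGroup M] [Module k M]
    (br : M →ₗ[k] M →ₗ[k] M)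
    (rac : ∀ x y z : M, br x (br y z) = - br x (br z y))
    (hl2 : ∀ x y z : M,
      br (br y x) (br x z)
        = br (br (br y x) z) x - br y (br (br x z) x) - br (br (br y z) x) x)
    (Mann : Submodule k M)
    (hMann : Mann = Submodule.span k
      ({a : M | ∃ x y : M, a = rightJacobian br x x y} ∪ {a : M | ∃ x : M, a = br x x})) :
    ∃ qbr : (M ⧸ Mann) →ₗ[k] (M ⧸ Mann) →ₗ[k] (M ⧸ Mann),
      -- the induced bracket is well defined: computed on representatives
      (∀ x y : M, qbr (Submodule.Quotient.mk x) (Submodule.Quotient.mk y)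
          = (Submodule.Quotient.mk (br x y) : M ⧸ Mann)) ∧
      -- anti-commutativity
      (∀ a b : M ⧸ Mann, qbr a b = - qbr b a) ∧
      -- Malcev identity
      (∀ a b c : M ⧸ Mann,
        qbr (qbr a b) (qbr a c)
          = qbr (qbr (qbr a b) c) a + qbr (qbr (qbr b c) a) a
            + qbr (qbr (qbr c a) a) b) := by
  change Mann = annihilator br at hMann
  subst hMann
  have anti := LinearMap.quotientBracket_anticomm (br_add_br_swap_mem_annihilator br)
    (hleft := fun _ ha => br_mem_annihilator_of_mem_left h2 rac ha)
    (hright := fun _ ha => br_mem_annihilator_of_mem_right h2 rac ha)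
  exact ⟨_, LinearMap.quotientBracket_mk, anti,
    LinearMap.malcev_of_anticomm_of_huLiu_second _ anti
      (LinearMap.quotientBracket_huLiu_second hl2)⟩

/-- For a generalized Malcev algebra `(M, +, ⟨,⟩)` over a field of characteristic
not `2` or `3` with annihilator `M^ann = span({J⟨x,x,y⟩} ∪ {⟨x,x⟩})`, the quotient
`M/M^ann` carries a well-defined induced bilinear bracket `⟨x̄, ȳ⟩ = ⟨x,y⟩‾` which
is anti-commutative and satisfies the Malcev identity, i.e. `M/M^ann` is a Malcev
algebra. -/
theorem quotient_by_annihilator_isMalcev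
    (k : Type*) [Field k] (h2 : (2 : k) ≠ 0) (h3 : (3 : k) ≠ 0)
    (M : Type*) [AddCommGroup M] [Module k M]
    (br : M →ₗ[k] M →ₗ[k] M)
    (rac : ∀ x y z : M, br x (br y z) = - br x (br z y))
    (hl1 : ∀ x y z : M,
      br (br x y) (br x z) - br (br x z) (br x y)
        = br (br (br x y) z) x - br x (br (br x y) z)
          + br x (br x (br y z)) - br (br x (br y z)) x
          + br (br x (br x z)) y - br (br (br x z) x) y)
    (hl2 : ∀ x y z : M,
      br (br y x) (br x z)
        = br (br (br y x) z) x - br y (br (br x z) x) - br (br (br y z) x) x)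
    (hl3 : ∀ x y z : M,
      br (br z x) (br y x)
        = br (br z (br x y)) x + br (br (br z y) x) x - br (br (br z x) x) y)
    (Mann : Submodule k M)
    (hMann : Mann = Submodule.span k
      ({a : M | ∃ x y : M, a = rightJacobian br x x y} ∪ {a : M | ∃ x : M, a = br x x})) :
    ∃ qbr : (M ⧸ Mann) →ₗ[k] (M ⧸ Mann) →ₗ[k] (M ⧸ Mann),
      -- the induced bracket is well defined: computed on representatives
      (∀ x y : M, qbr (Submodule.Quotient.mk x) (Submodule.Quotient.mk y)
          = (Submodule.Quotient.mk (br x y) : M ⧸ Mann)) ∧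
      -- anti-commutativity
      (∀ a b : M ⧸ Mann, qbr a b = - qbr b a) ∧
      -- Malcev identity
      (∀ a b c : M ⧸ Mann,
        qbr (qbr a b) (qbr a c)
          = qbr (qbr (qbr a b) c) a + qbr (qbr (qbr b c) a) a
            + qbr (qbr (qbr c a) a) b) :=
  quotient_by_annihilator_isMalcev_general k h2 M br rac hl2 Mann hMann
end
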